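/- arXiv:2511.04844 — 3 statements merged into one kernel-verified Lean document; each statement's English description precedes it below -/
import Mathlib

section
/- There is a universal constant C such that the following holds. Let d ≥ 1, β ≥ 1, h > 0 with βh ≤ 1, and τ ∈ [0,h], and let s₁, s₂ : ℝ^d → ℝ^d be β-Lipschitz maps. For x, ξ⁺, ξ ∈ ℝ^d define X⁺(x) = e^{−τ} x + 2(1−e^{−τ}) s₁(x) + ξ⁺ and F(x) = e^{−h} x + 2(1−e^{−h}) s₂(X⁺(x)) + ξ. Then for all x, y ∈ ℝ^d and all ξ⁺, ξ ∈ ℝ^d: ‖F(x) − F(y) − (x − y)‖ ≤ C·βh·‖x − y‖, and consequently ‖F(x) − F(y)‖ ≤ (1 + C·βh)·‖x − y‖. (These are the coupling and Wasserstein-Lipschitzness properties of one step of the randomized midpoint discretization under synchronous coupling of the Gaussian noise.) -/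
open MeasureTheory Real
open scoped RealInnerProductSpace ENNReal Classical

noncomputable section

/-- `Euc d` is Euclidean space `ℝ^d`. -/
abbrev Euc (d : ℕ) := EuclideanSpace ℝ (Fin d)

/-- The standard Gaussian measure `N(0, I_d)` on `ℝ^d`. -/
def stdGaussian (d : ℕ) : Measure (Euc d) :=
  volume.withDensity fun x =>
    ENNReal.ofReal ((2 * π) ^ (-(d : ℝ) / 2) * Real.exp (-‖x‖ ^ 2 / 2))

/-- The density `p_t` of the Ornstein–Uhlenbeck flow of `μ` at time `t`. -/
def ouDensity (d : ℕ) (μ : Measure (Euc d)) (t : ℝ) (x : Euc d) : ℝ :=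
  (2 * π * (1 - Real.exp (-2 * t))) ^ (-(d : ℝ) / 2) *
    ∫ y, Real.exp (-‖x - Real.exp (-t) • y‖ ^ 2 / (2 * (1 - Real.exp (-2 * t)))) ∂μ

/-- The Ornstein–Uhlenbeck flow `μ_t` of `μ` at time `t`, i.e. the measure with
density `p_t` with respect to Lebesgue measure. -/
def ouFlow (d : ℕ) (μ : Measure (Euc d)) (t : ℝ) : Measure (Euc d) :=
  volume.withDensity fun x => ENNReal.ofReal (ouDensity d μ t x)

/-- The relative score `x ↦ ∇ log p_t(x) + x` of `μ_t`. -/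
def relScore (d : ℕ) (μ : Measure (Euc d)) (t : ℝ) (x : Euc d) : Euc d :=
  gradient (fun z => Real.log (ouDensity d μ t z)) x + x

/-- The relative Fisher information `FI(μ_t ‖ γ_d) = ∫ ‖∇ log p_t + x‖² dμ_t`. -/
def relFisher (d : ℕ) (μ : Measure (Euc d)) (t : ℝ) : ℝ :=
  ∫ x, ‖relScore d μ t x‖ ^ 2 ∂(ouFlow d μ t)

/-- Kullback–Leibler divergence `KL(ρ ‖ σ)`. -/
def KLdiv {α : Type*} [MeasurableSpace α] (ρ σ : Measure α) : ℝ≥0∞ :=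
  if ρ ≪ σ then ENNReal.ofReal (∫ x, Real.log ((ρ.rnDeriv σ x).toReal) ∂ρ) else ⊤

/-- One step of the randomized midpoint discretization with fixed noise realizations:
`F(x) = e^{−h} x + 2(1−e^{−h}) s₂(X⁺(x)) + ξ` with
`X⁺(x) = e^{−τ} x + 2(1−e^{−τ}) s₁(x) + ξ⁺`. -/
def rmdStepDet (d : ℕ) (s₁ s₂ : Euc d → Euc d) (h τ : ℝ) (ξp ξ : Euc d) (x : Euc d) : Euc d :=
  Real.exp (-h) • x +
    (2 * (1 - Real.exp (-h))) •
      s₂ (Real.exp (-τ) • x + (2 * (1 - Real.exp (-τ))) • s₁ x + ξp) + ξ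

/- Both the midpoint `X⁺` and the full step `F` are exponential-integrator steps
`x ↦ e^{-t} x + 2(1 - e^{-t}) s(x) + ξ` (with `s = s₁`, resp. `s = s₂ ∘ X⁺`), and such a step
is the identity up to a perturbation of Lipschitz constant `(1 - e^{-t})(1 + 2L) ≤ t(1 + 2L)`
when `s` is `L`-Lipschitz. Applying this to `X⁺` gives a Lipschitz constant `≤ 4` for it, and
then to `F` with `L = 4β` the bound `h(1 + 8β) ≤ 9βh`. -/

theorem one_sub_exp_neg_mem_Icc {t : ℝ} (ht : 0 ≤ t) : 1 - Real.exp (-t) ∈ Set.Icc 0 t :=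
  ⟨sub_nonneg.2 (Real.exp_le_one_iff.2 (neg_nonpos.2 ht)), by
    linarith [Real.one_sub_le_exp_neg t]⟩

section ExpIntegratorStep

variable {E : Type*} [SeminormedAddCommGroup E]

theorem norm_sub_le_of_norm_sub_sub_le {x y u v : E} {c : ℝ}
    (h : ‖u - v - (x - y)‖ ≤ c * ‖x - y‖) : ‖u - v‖ ≤ (1 + c) * ‖x - y‖ :=
  calc ‖u - v‖ = ‖(u - v - (x - y)) + (x - y)‖ := by rw [sub_add_cancel]
    _ ≤ c * ‖x - y‖ + ‖x - y‖ := (norm_add_le _ _).trans (by gcongr)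
    _ = (1 + c) * ‖x - y‖ := by ring

variable [NormedSpace ℝ E]

def expIntegratorStep (s : E → E) (t : ℝ) (ξ x : E) : E :=
  Real.exp (-t) • x + (2 * (1 - Real.exp (-t))) • s x + ξ

theorem rmdStepDet_eq_expIntegratorStep (d : ℕ) (s₁ s₂ : Euc d → Euc d) (h τ : ℝ)
    (ξp ξ : Euc d) :
    rmdStepDet d s₁ s₂ h τ ξp ξ = expIntegratorStep (s₂ ∘ expIntegratorStep s₁ τ ξp) h ξ :=
  rfl

theorem norm_expIntegratorStep_sub_sub_le {s : E → E} {L t : ℝ} (hL : 0 ≤ L)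
    (hs : ∀ x y, ‖s x - s y‖ ≤ L * ‖x - y‖) (ht : 0 ≤ t) (ξ x y : E) :
    ‖expIntegratorStep s t ξ x - expIntegratorStep s t ξ y - (x - y)‖ ≤
      t * (1 + 2 * L) * ‖x - y‖ := by
  obtain ⟨hε₀, hεt⟩ := one_sub_exp_neg_mem_Icc ht
  set ε := 1 - Real.exp (-t)
  have hdecomp : expIntegratorStep s t ξ x - expIntegratorStep s t ξ y - (x - y) =
      (-ε) • (x - y) + (2 * ε) • (s x - s y) := by
    simp only [expIntegratorStep, ε, smul_sub, neg_sub, sub_smul, one_smul]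
    abel
  calc _ = ‖(-ε) • (x - y) + (2 * ε) • (s x - s y)‖ := by rw [hdecomp]
    _ ≤ ε * ‖x - y‖ + 2 * ε * (L * ‖x - y‖) := by
      refine (norm_add_le _ _).trans ?_
      rw [norm_smul, norm_smul, Real.norm_eq_abs, Real.norm_eq_abs, abs_neg,
        abs_of_nonneg hε₀, abs_of_nonneg (by positivity)]
      gcongr
      exact hs x y
    _ = ε * (1 + 2 * L) * ‖x - y‖ := by ring
    _ ≤ t * (1 + 2 * L) * ‖x - y‖ := by gcongr

theorem norm_expIntegratorStep_sub_le {s : E → E} {L t : ℝ} (hL : 0 ≤ L)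
    (hs : ∀ x y, ‖s x - s y‖ ≤ L * ‖x - y‖) (ht : 0 ≤ t) (ξ x y : E) :
    ‖expIntegratorStep s t ξ x - expIntegratorStep s t ξ y‖ ≤
      (1 + t * (1 + 2 * L)) * ‖x - y‖ :=
  norm_sub_le_of_norm_sub_sub_le (norm_expIntegratorStep_sub_sub_le hL hs ht ξ x y)

end ExpIntegratorStep

/-- coupling and Wasserstein Lipschitzness of one randomized midpoint step.
There is a universal constant `C` such that for `β ≥ 1`, `0 < h` with `βh ≤ 1`, `τ ∈ [0,h]`,
`β`-Lipschitz maps `s₁, s₂`, and any noise realizations `ξ⁺, ξ`: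
`‖F(x) − F(y) − (x − y)‖ ≤ C βh ‖x − y‖` and `‖F(x) − F(y)‖ ≤ (1 + C βh) ‖x − y‖`. -/
theorem statement_7 :
    ∃ C : ℝ, 0 < C ∧
      ∀ (d : ℕ), 1 ≤ d →
        ∀ (β h τ : ℝ), 1 ≤ β → 0 < h → β * h ≤ 1 → τ ∈ Set.Icc 0 h →
          ∀ s₁ s₂ : Euc d → Euc d,
            (∀ x y, ‖s₁ x - s₁ y‖ ≤ β * ‖x - y‖) →
            (∀ x y, ‖s₂ x - s₂ y‖ ≤ β * ‖x - y‖) →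
            ∀ ξp ξ : Euc d, ∀ x y : Euc d,
              ‖rmdStepDet d s₁ s₂ h τ ξp ξ x - rmdStepDet d s₁ s₂ h τ ξp ξ y - (x - y)‖ ≤
                  C * β * h * ‖x - y‖ ∧
              ‖rmdStepDet d s₁ s₂ h τ ξp ξ x - rmdStepDet d s₁ s₂ h τ ξp ξ y‖ ≤
                  (1 + C * β * h) * ‖x - y‖ := by
  refine ⟨9, by norm_num, fun d _ β h τ hβ hh hβh ⟨hτ₀, hτh⟩ s₁ s₂ hs₁ hs₂ ξp ξ x y => ?_⟩
  have hβ₀ : 0 ≤ β := by linarith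
  have hτβ : τ * (1 + 2 * β) ≤ 3 := by nlinarith
  have hmid : ∀ x y, ‖(s₂ ∘ expIntegratorStep s₁ τ ξp) x - (s₂ ∘ expIntegratorStep s₁ τ ξp) y‖
      ≤ 4 * β * ‖x - y‖ := fun x y =>
    calc _ ≤ β * ((1 + τ * (1 + 2 * β)) * ‖x - y‖) :=
          (hs₂ _ _).trans (by gcongr; exact norm_expIntegratorStep_sub_le hβ₀ hs₁ hτ₀ ξp x y)
      _ ≤ 4 * β * ‖x - y‖ := by rw [← mul_assoc, mul_comm 4]; gcongr; linarith
  have hstep : ‖rmdStepDet d s₁ s₂ h τ ξp ξ x - rmdStepDet d s₁ s₂ h τ ξp ξ y - (x - y)‖ ≤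
      9 * β * h * ‖x - y‖ := by
    rw [rmdStepDet_eq_expIntegratorStep]
    exact (norm_expIntegratorStep_sub_sub_le (by positivity) hmid hh.le ξ x y).trans
      (mul_le_mul_of_nonneg_right (by nlinarith) (norm_nonneg _))
  exact ⟨hstep, norm_sub_le_of_norm_sub_sub_le hstep⟩
end
end

section
/- Let d ≥ 1, let e₁ be the first standard basis vector of ℝ^d, and let μ = (1/2)δ_{e₁} + (1/2)δ_{−e₁}. Then for every t > 0 and every x ∈ ℝ^d, writing x₁ = ⟨e₁, x⟩, the Hessian of log p_t is given explicitly by ∇²log p_t(x) = −(1/(1−e^{−2t})) I_d + (e^{−2t}/(1−e^{−2t})²)·sech²(x₁/(2·sinh t))·e₁e₁ᵀ. -/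
open MeasureTheory Real
open scoped RealInnerProductSpace ENNReal Classical

noncomputable section

/-- The equal mixture of two point masses `(1/2)δ_e + (1/2)δ_{−e}`. -/
def twoPointMix (d : ℕ) (e : Euc d) : Measure (Euc d) :=
  (1 / 2 : ℝ≥0∞) • Measure.dirac e + (1 / 2 : ℝ≥0∞) • Measure.dirac (-e)

/-!
The two-point mixture makes `p_t` an explicit product: completing the square in both Gaussian
factors gives `p_t(x) = C · exp(-‖x‖²/(2s)) · cosh(x₁/(2 sinh t))` with `s = 1 - e^{-2t}`,
because `e^{-t}/s = 1/(2 sinh t)`. Hence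
`∇ log p_t(x) = -x/s + tanh(x₁/(2 sinh t))/(2 sinh t) · e₁`, and one more differentiation, with `tanh' = sech²`, gives the Hessian.
-/

open InnerProductSpace

namespace Real

theorem hasDerivAt_log_cosh (x : ℝ) : HasDerivAt (fun y => log (cosh y)) (tanh x) x := by
  simpa only [tanh_eq_sinh_div_cosh] using (hasDerivAt_cosh x).log (cosh_pos x).ne'

theorem hasDerivAt_tanh (x : ℝ) : HasDerivAt tanh (1 / cosh x ^ 2) x := by
  have h := (hasDerivAt_sinh x).div (hasDerivAt_cosh x) (cosh_pos x).ne'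
  rw [← sq, ← sq, cosh_sq_sub_sinh_sq] at h
  rwa [show sinh / cosh = tanh from (funext tanh_eq_sinh_div_cosh).symm] at h

theorem exp_neg_sq (t : ℝ) : exp (-t) ^ 2 = exp (-2 * t) := by
  rw [← exp_nat_mul]; ring_nf

theorem exp_neg_div_one_sub_exp_neg_two_mul (t : ℝ) :
    exp (-t) / (1 - exp (-2 * t)) = 1 / (2 * sinh t) := by
  have h : 1 - exp (-2 * t) = exp (-t) * (2 * sinh t) := by
    rw [sinh_eq, show -2 * t = -t + -t by ring, exp_add, exp_neg]
    field_simp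
  rw [h, div_mul_cancel_left₀ (exp_ne_zero _), one_div]

end Real

section InnerProductSpace

variable {E : Type*} [NormedAddCommGroup E] [InnerProductSpace ℝ E]

theorem exp_neg_norm_sub_sq_add_exp_neg_norm_add_sq (z e : E) (s : ℝ) :
    exp (-‖z - e‖ ^ 2 / (2 * s)) + exp (-‖z + e‖ ^ 2 / (2 * s)) =
      2 * exp (-(‖z‖ ^ 2 + ‖e‖ ^ 2) / (2 * s)) * cosh (⟪e, z⟫ / s) := by
  have hsub : -‖z - e‖ ^ 2 / (2 * s) = -(‖z‖ ^ 2 + ‖e‖ ^ 2) / (2 * s) + ⟪e, z⟫ / s := by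
    rw [norm_sub_sq_real, real_inner_comm]; ring
  have hadd : -‖z + e‖ ^ 2 / (2 * s) = -(‖z‖ ^ 2 + ‖e‖ ^ 2) / (2 * s) + -(⟪e, z⟫ / s) := by
    rw [norm_add_sq_real, real_inner_comm]; ring
  rw [hsub, hadd, exp_add, exp_add, cosh_eq]
  ring

theorem hasFDerivAt_inner_div (e : E) (r : ℝ) (z : E) :
    HasFDerivAt (fun w => ⟪e, w⟫ / r) (r⁻¹ • innerSL ℝ e) z := by
  simpa only [div_eq_mul_inv, innerSL_apply_apply] using (innerSL ℝ e).hasFDerivAt.mul_const r⁻¹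

theorem inner_fderiv_smul_add_tanh_inner_smul_apply (c r : ℝ) (e x u v : E) :
    ⟪fderiv ℝ (fun z : E => c • z + (tanh (⟪e, z⟫ / r) / r) • e) x u, v⟫ =
      c * ⟪u, v⟫ + (1 / r) ^ 2 * (1 / cosh (⟪e, x⟫ / r)) ^ 2 * (⟪e, u⟫ * ⟪e, v⟫) := by
  have htanh : HasFDerivAt (fun z : E => tanh (⟪e, z⟫ / r) / r)
      (r⁻¹ • (1 / cosh (⟪e, x⟫ / r) ^ 2) • (r⁻¹ • innerSL ℝ e)) x := by
    simpa only [div_eq_mul_inv _ r, Function.comp_def] using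
      ((hasDerivAt_tanh _).comp_hasFDerivAt x (hasFDerivAt_inner_div e r x)).mul_const r⁻¹
  have hid : HasFDerivAt (fun z : E => c • z) (c • ContinuousLinearMap.id ℝ E) x :=
    (hasFDerivAt_id x).const_smul c
  have hfield : HasFDerivAt (fun z : E => c • z + (tanh (⟪e, z⟫ / r) / r) • e)
      (c • ContinuousLinearMap.id ℝ E +
        (r⁻¹ • (1 / cosh (⟪e, x⟫ / r) ^ 2) • (r⁻¹ • innerSL ℝ e)).smulRight e) x :=
    hid.add (htanh.smul_const e)
  rw [hfield.fderiv]
  simp only [add_apply, smul_apply, ContinuousLinearMap.id_apply,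
    ContinuousLinearMap.smulRight_apply, innerSL_apply_apply, inner_add_left, real_inner_smul_left,
    smul_eq_mul]
  ring

variable [CompleteSpace E]

theorem gradient_const_sub_norm_sq_add_log_cosh_inner (c s r : ℝ) (e : E) :
    gradient (fun w : E => c - ‖w‖ ^ 2 / (2 * s) + log (cosh (⟪e, w⟫ / r))) =
      fun z => (-(1 / s)) • z + (tanh (⟪e, z⟫ / r) / r) • e := by
  funext z
  refine HasGradientAt.gradient (hasGradientAt_iff_hasFDerivAt.2 ?_)
  have hquad : HasFDerivAt (fun w : E => ‖w‖ ^ 2 / (2 * s)) ((2 * s)⁻¹ • 2 • innerSL ℝ z) z := by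
    simpa only [div_eq_mul_inv] using
      (hasStrictFDerivAt_norm_sq z).hasFDerivAt.mul_const (2 * s)⁻¹
  have hlogCosh : HasFDerivAt (fun w : E => log (cosh (⟪e, w⟫ / r)))
      (tanh (⟪e, z⟫ / r) • (r⁻¹ • innerSL ℝ e)) z :=
    (hasDerivAt_log_cosh _).comp_hasFDerivAt z (hasFDerivAt_inner_div e r z)
  refine (((hasFDerivAt_const c z).sub hquad).add hlogCosh).congr_fderiv ?_
  ext u
  simp only [toDual_apply_apply, inner_add_left, real_inner_smul_left, add_apply, sub_apply,
    smul_apply, innerSL_apply_apply, zero_apply, smul_eq_mul]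
  ring

end InnerProductSpace

section TwoPointMix

variable {d : ℕ}

theorem integral_twoPointMix (e : Euc d) (f : Euc d → ℝ) :
    ∫ y, f y ∂twoPointMix d e = (f e + f (-e)) / 2 := by
  rw [twoPointMix, integral_add_measure ((integrable_dirac enorm_lt_top).smul_measure (by simp))
      ((integrable_dirac enorm_lt_top).smul_measure (by simp)),
    integral_smul_measure, integral_smul_measure, integral_dirac, integral_dirac]
  simp only [ENNReal.toReal_div, ENNReal.toReal_one, ENNReal.toReal_ofNat, smul_eq_mul]
  ring

theorem ouDensity_twoPointMix (e : Euc d) (t : ℝ) (z : Euc d) :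
    ouDensity d (twoPointMix d e) t z =
      (2 * π * (1 - exp (-2 * t))) ^ (-(d : ℝ) / 2) *
        exp (-(‖z‖ ^ 2 + exp (-2 * t) * ‖e‖ ^ 2) / (2 * (1 - exp (-2 * t)))) *
          cosh (⟪e, z⟫ / (2 * sinh t)) := by
  rw [ouDensity, integral_twoPointMix, smul_neg, sub_neg_eq_add,
    exp_neg_norm_sub_sq_add_exp_neg_norm_add_sq, norm_smul, real_inner_smul_left,
    mul_div_right_comm (exp (-t)), exp_neg_div_one_sub_exp_neg_two_mul, norm_eq_abs,
    abs_of_pos (exp_pos _), mul_pow, exp_neg_sq]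
  ring_nf

theorem gradient_log_ouDensity_twoPointMix (e : Euc d) {t : ℝ} (ht : 0 < t) :
    gradient (fun w => log (ouDensity d (twoPointMix d e) t w)) =
      fun z => (-(1 / (1 - exp (-2 * t)))) • z +
        (tanh (⟪e, z⟫ / (2 * sinh t)) / (2 * sinh t)) • e := by
  set s := 1 - exp (-2 * t)
  have hs : 0 < s := sub_pos.2 (exp_lt_one_iff.2 (by linarith))
  have hC : 0 < (2 * π * s) ^ (-(d : ℝ) / 2) := rpow_pos_of_pos (by positivity) _
  have hlog : (fun w => log (ouDensity d (twoPointMix d e) t w)) = fun w =>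
      (log ((2 * π * s) ^ (-(d : ℝ) / 2)) - exp (-2 * t) * ‖e‖ ^ 2 / (2 * s)) -
        ‖w‖ ^ 2 / (2 * s) + log (cosh (⟪e, w⟫ / (2 * sinh t))) := by
    funext w
    rw [ouDensity_twoPointMix, log_mul (by positivity) (cosh_pos _).ne',
      log_mul hC.ne' (exp_pos _).ne', log_exp]
    ring
  rw [hlog, gradient_const_sub_norm_sq_add_log_cosh_inner]

end TwoPointMix

/-- For `μ = (1/2)δ_{e₁} + (1/2)δ_{−e₁}` on `ℝ^d`, `t > 0` and `x ∈ ℝ^d`,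
writing `x₁ = ⟪e₁, x⟫`, the Hessian of `log p_t` is
`−(1/(1−e^{−2t})) I + (e^{−2t}/(1−e^{−2t})²) sech²(x₁/(2 sinh t)) e₁e₁ᵀ`,
stated through the associated bilinear forms. -/
theorem statement_13 (d : ℕ) (hd : 1 ≤ d) (t : ℝ) (ht : 0 < t) :
    ∀ x u v : Euc d,
      ⟪(fderiv ℝ
          (fun z =>
            gradient
              (fun w =>
                Real.log
                  (ouDensity d (twoPointMix d (EuclideanSpace.single (⟨0, hd⟩ : Fin d) 1)) t w))
              z)
          x) u, v⟫ =
        -(1 / (1 - Real.exp (-2 * t))) * ⟪u, v⟫ +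
          Real.exp (-2 * t) / (1 - Real.exp (-2 * t)) ^ 2 *
            (1 / Real.cosh
                (⟪EuclideanSpace.single (⟨0, hd⟩ : Fin d) (1 : ℝ), x⟫ / (2 * Real.sinh t))) ^ 2 *
            (⟪EuclideanSpace.single (⟨0, hd⟩ : Fin d) (1 : ℝ), u⟫ *
              ⟪EuclideanSpace.single (⟨0, hd⟩ : Fin d) (1 : ℝ), v⟫) := by
  intro x u v
  have hcoeff : exp (-2 * t) / (1 - exp (-2 * t)) ^ 2 = (1 / (2 * sinh t)) ^ 2 := by
    rw [← exp_neg_div_one_sub_exp_neg_two_mul, div_pow, exp_neg_sq]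
  rw [gradient_log_ouDensity_twoPointMix _ ht, inner_fderiv_smul_add_tanh_inner_smul_apply, hcoeff]
end
end

section
/- There is a universal constant C such that for every real K ≥ 3 and all real numbers 0 ≤ a ≤ b < 1, the integral ∫_a^b (v/(1−v))^{K−1} dv is at most C·b^{K−1}·(1−b)^{2−K}/K. -/
/-!
With `p = K - 1`, the function `G v = v ^ p * (1 - v) ^ (1 - p)` has derivative
`p v ^ (p - 1) (1 - v) ^ (1 - p) + (p - 1) (v / (1 - v)) ^ p`, which dominates
`(p - 1) (v / (1 - v)) ^ p` on `[0, 1)`. Hence the integral is at most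
`G b / (p - 1) = b ^ (K - 1) (1 - b) ^ (2 - K) / (K - 2)`, and `1 / (K - 2) ≤ 3 / K` for `K ≥ 3`.
-/

open Real Set

theorem hasDerivAt_rpow_mul_one_sub_rpow {p v : ℝ} (hv : 0 < v) (hv1 : v < 1) :
    HasDerivAt (fun v : ℝ => v ^ p * (1 - v) ^ (1 - p))
      (p * v ^ (p - 1) * (1 - v) ^ (1 - p) + (p - 1) * (v / (1 - v)) ^ p) v := by
  have h1v : 0 < 1 - v := by linarith
  have hpow : HasDerivAt (fun v : ℝ => v ^ p) (p * v ^ (p - 1)) v :=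
    hasDerivAt_rpow_const (Or.inl hv.ne')
  have hpow' : HasDerivAt (fun v : ℝ => (1 - v) ^ (1 - p)) ((p - 1) * (1 - v) ^ (-p)) v := by
    have := ((hasDerivAt_id' v).const_sub 1).rpow_const (p := 1 - p) (Or.inl h1v.ne')
    convert this using 1
    rw [show 1 - p - 1 = -p by ring]
    ring
  refine (hpow.mul hpow').congr_deriv ?_
  rw [div_rpow hv.le h1v.le, rpow_neg h1v.le]
  ring

theorem continuousOn_rpow_mul_one_sub_rpow {p b : ℝ} (hp : 0 ≤ p) (hb : b < 1) (a : ℝ) :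
    ContinuousOn (fun v : ℝ => v ^ p * (1 - v) ^ (1 - p)) (Icc a b) := by
  refine ContinuousOn.mul (continuousOn_id.rpow_const fun _ _ => Or.inr hp) ?_
  exact (continuousOn_const.sub continuousOn_id).rpow_const
    fun v hv => Or.inl (sub_ne_zero.mpr (hv.2.trans_lt hb).ne')

theorem continuousOn_div_one_sub_rpow {p b : ℝ} (hp : 0 ≤ p) (hb : b < 1) (a : ℝ) :
    ContinuousOn (fun v : ℝ => (v / (1 - v)) ^ p) (Icc a b) := by
  refine ContinuousOn.rpow_const ?_ fun _ _ => Or.inr hp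
  exact continuousOn_id.div (continuousOn_const.sub continuousOn_id)
    fun v hv => sub_ne_zero.mpr (hv.2.trans_lt hb).ne'

theorem integral_div_one_sub_rpow_le {p a b : ℝ} (hp : 1 < p) (ha : 0 ≤ a) (hab : a ≤ b)
    (hb : b < 1) :
    ∫ v in a..b, (v / (1 - v)) ^ p ≤ b ^ p * (1 - b) ^ (1 - p) / (p - 1) := by
  have hp1 : 0 < p - 1 := by linarith
  have hFTC : ∫ v in a..b, (p - 1) * (v / (1 - v)) ^ p ≤
      b ^ p * (1 - b) ^ (1 - p) - a ^ p * (1 - a) ^ (1 - p) := by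
    refine intervalIntegral.integral_le_sub_of_hasDeriv_right_of_le hab
      (continuousOn_rpow_mul_one_sub_rpow (by linarith) hb a)
      (fun v hv => (hasDerivAt_rpow_mul_one_sub_rpow (ha.trans_lt hv.1)
        (hv.2.trans hb)).hasDerivWithinAt)
      ((continuousOn_const.mul (continuousOn_div_one_sub_rpow (by linarith) hb a)).integrableOn_Icc)
      fun v hv => le_add_of_nonneg_left ?_
    have hv0 : 0 < v := ha.trans_lt hv.1
    have h1v : 0 < 1 - v := by linarith [hv.2]
    positivity
  have ha_nonneg : 0 ≤ a ^ p * (1 - a) ^ (1 - p) :=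
    mul_nonneg (rpow_nonneg ha p) (rpow_nonneg (by linarith) _)
  rw [intervalIntegral.integral_const_mul] at hFTC
  rw [le_div_iff₀ hp1]
  linarith

/-- There is a universal constant `C` such that for every real `K ≥ 3` and
`0 ≤ a ≤ b < 1`, `∫_a^b (v/(1−v))^{K−1} dv ≤ C b^{K−1} (1−b)^{2−K} / K`. -/
theorem statement_16 :
    ∃ C : ℝ, 0 < C ∧
      ∀ (K : ℝ), 3 ≤ K → ∀ a b : ℝ, 0 ≤ a → a ≤ b → b < 1 →
        (∫ v in a..b, (v / (1 - v)) ^ (K - 1)) ≤ C * b ^ (K - 1) * (1 - b) ^ (2 - K) / K := by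
  refine ⟨3, by norm_num, fun K hK a b ha hab hb => ?_⟩
  have hX : 0 ≤ b ^ (K - 1) * (1 - b) ^ (2 - K) :=
    mul_nonneg (rpow_nonneg (ha.trans hab) _) (rpow_nonneg (by linarith) _)
  calc ∫ v in a..b, (v / (1 - v)) ^ (K - 1)
      ≤ b ^ (K - 1) * (1 - b) ^ (1 - (K - 1)) / (K - 1 - 1) :=
        integral_div_one_sub_rpow_le (by linarith) ha hab hb
    _ = b ^ (K - 1) * (1 - b) ^ (2 - K) / (K - 2) := by ring_nf
    _ ≤ b ^ (K - 1) * (1 - b) ^ (2 - K) / (K / 3) :=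
        div_le_div_of_nonneg_left hX (by linarith) (by linarith)
    _ = 3 * b ^ (K - 1) * (1 - b) ^ (2 - K) / K := by ring
end
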